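/- arXiv:2603.09019 — 2 statements merged into one kernel-verified Lean document; each statement's English description precedes it below -/
import Mathlib

section
/- Each of the two conditional means is within 1/2 of the unconditional mean: |μ_even − μ| ≤ 1/2 and |μ_odd − μ| ≤ 1/2. -/
/-
Put `G = ∏ i, halfSign (X i)`: it is `1` where `X` is an integer and `-1` where `X` is a
half-integer, so `1_{X ∈ ℤ} = (1 + G) / 2` and `1_{X ∈ ℤ + 1/2} = (1 - G) / 2`. Hence
`μ_even - μ = Cov(X, G) / (1 + E G)` and `μ_odd - μ = -Cov(X, G) / (1 - E G)`. By independence,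
`E G = ∏ t_i` with `t_i = 1 - 2 T_i`, and `Cov(X, G) = ∑_j Cov(X_j, halfSign X_j) ∏_{k ≠ j} t_k`,
where `|Cov(X_j, halfSign X_j)| = T_j |W_j - L_j| ≤ (1 - |t_j|) / 2`. A telescoping estimate gives
`|Cov(X, G)| ≤ (1 - |E G|) / 2 ≤ (1 ± E G) / 2`.
-/

open MeasureTheory ProbabilityTheory Finset
open scoped Classical

theorem sum_prod_erase_mul_one_sub_le {ι : Type*} [DecidableEq ι] (s : Finset ι) {u : ι → ℝ}
    (h0 : ∀ i ∈ s, 0 ≤ u i) (h1 : ∀ i ∈ s, u i ≤ 1) :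
    ∑ j ∈ s, (∏ k ∈ s.erase j, u k) * (1 - u j) ≤ 1 - ∏ k ∈ s, u k := by
  induction s using Finset.induction with
  | empty => simp
  | insert a s ha ih =>
    simp only [mem_insert, forall_eq_or_imp] at h0 h1
    have hP0 : 0 ≤ ∏ k ∈ s, u k := prod_nonneg h0.2
    have hP1 : ∏ k ∈ s, u k ≤ 1 := prod_le_one h0.2 h1.2
    have herase : ∀ j ∈ s, ∏ k ∈ (insert a s).erase j, u k = u a * ∏ k ∈ s.erase j, u k := by
      intro j hj
      rw [erase_insert_of_ne (ne_of_mem_of_not_mem hj ha).symm,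
        prod_insert fun h => ha (mem_of_mem_erase h)]
    have hsum : ∑ j ∈ s, (∏ k ∈ (insert a s).erase j, u k) * (1 - u j)
        = u a * ∑ j ∈ s, (∏ k ∈ s.erase j, u k) * (1 - u j) := by
      rw [mul_sum]
      exact sum_congr rfl fun j hj => by rw [herase j hj, mul_assoc]
    rw [sum_insert ha, erase_insert ha, prod_insert ha, hsum]
    nlinarith [mul_le_mul_of_nonneg_left (ih h0.2 h1.2) h0.1]

theorem abs_sum_prod_erase_mul_le {ι : Type*} [DecidableEq ι] (s : Finset ι) {t e : ι → ℝ}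
    {C : ℝ} (hC : 0 ≤ C) (ht : ∀ i ∈ s, |t i| ≤ 1) (he : ∀ i ∈ s, |e i| ≤ C * (1 - |t i|)) :
    |∑ j ∈ s, (∏ k ∈ s.erase j, t k) * e j| ≤ C * (1 - |∏ k ∈ s, t k|) :=
  calc |∑ j ∈ s, (∏ k ∈ s.erase j, t k) * e j|
      ≤ ∑ j ∈ s, (∏ k ∈ s.erase j, |t k|) * |e j| := by
        refine (abs_sum_le_sum_abs _ _).trans_eq (sum_congr rfl fun j _ => ?_)
        rw [abs_mul, abs_prod]
    _ ≤ ∑ j ∈ s, (∏ k ∈ s.erase j, |t k|) * (C * (1 - |t j|)) :=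
        sum_le_sum fun j hj =>
          mul_le_mul_of_nonneg_left (he j hj) (prod_nonneg fun _ _ => abs_nonneg _)
    _ = C * ∑ j ∈ s, (∏ k ∈ s.erase j, |t k|) * (1 - |t j|) := by
        rw [mul_sum]; exact sum_congr rfl fun j _ => by ring
    _ ≤ C * (1 - |∏ k ∈ s, t k|) := by
        rw [abs_prod]
        exact mul_le_mul_of_nonneg_left
          (sum_prod_erase_mul_one_sub_le s (fun i _ => abs_nonneg _) ht) hC

theorem intCast_ne_intCast_add_half (m k : ℤ) : (m : ℝ) ≠ k + 1 / 2 := by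
  intro h
  have : (2 * m : ℤ) = 2 * k + 1 := by exact_mod_cast (by linarith : (2 * m : ℝ) = 2 * k + 1)
  omega

noncomputable def halfSign (x : ℝ) : ℝ := if x = 1 / 2 then -1 else 1

theorem measurable_halfSign : Measurable halfSign :=
  Measurable.ite (measurableSet_singleton _) measurable_const measurable_const

theorem abs_halfSign_le (x : ℝ) : |halfSign x| ≤ 1 := by
  unfold halfSign; split_ifs <;> norm_num

theorem prod_halfSign_parity {ι : Type*} (s : Finset ι) {x : ι → ℝ}
    (hx : ∀ i ∈ s, x i = 0 ∨ x i = 1 / 2 ∨ x i = 1) :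
    ((∃ m : ℤ, ∑ i ∈ s, x i = m) ∧ ∏ i ∈ s, halfSign (x i) = 1) ∨
      ((∃ m : ℤ, ∑ i ∈ s, x i = m + 1 / 2) ∧ ∏ i ∈ s, halfSign (x i) = -1) := by
  induction s using Finset.induction with
  | empty => exact .inl ⟨⟨0, by simp⟩, by simp⟩
  | insert a s ha ih =>
    simp only [mem_insert, forall_eq_or_imp] at hx
    rw [sum_insert ha, prod_insert ha]
    rcases hx.1 with h | h | h <;> rcases ih hx.2 with ⟨⟨m, hm⟩, hp⟩ | ⟨⟨m, hm⟩, hp⟩ <;>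
      rw [h, hm, hp]
    · exact .inl ⟨⟨m, by ring⟩, by norm_num [halfSign]⟩
    · exact .inr ⟨⟨m, by ring⟩, by norm_num [halfSign]⟩
    · exact .inr ⟨⟨m, by ring⟩, by norm_num [halfSign]⟩
    · exact .inl ⟨⟨m + 1, by push_cast; ring⟩, by norm_num [halfSign]⟩
    · exact .inl ⟨⟨m + 1, by push_cast; ring⟩, by norm_num [halfSign]⟩
    · exact .inr ⟨⟨m + 1, by push_cast; ring⟩, by norm_num [halfSign]⟩

theorem prod_halfSign_eq_ite_int {ι : Type*} (s : Finset ι) {x : ι → ℝ}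
    (hx : ∀ i ∈ s, x i = 0 ∨ x i = 1 / 2 ∨ x i = 1) :
    ∏ i ∈ s, halfSign (x i) = if ∃ m : ℤ, ∑ i ∈ s, x i = m then 1 else -1 := by
  rcases prod_halfSign_parity s hx with ⟨he, hp⟩ | ⟨⟨k, hk⟩, hp⟩
  · rw [hp, if_pos he]
  · rw [hp, if_neg]
    rintro ⟨m, hm⟩
    exact intCast_ne_intCast_add_half m k (hm ▸ hk)

theorem prod_halfSign_eq_ite_int_add_half {ι : Type*} (s : Finset ι) {x : ι → ℝ}
    (hx : ∀ i ∈ s, x i = 0 ∨ x i = 1 / 2 ∨ x i = 1) :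
    ∏ i ∈ s, halfSign (x i) = if ∃ m : ℤ, ∑ i ∈ s, x i = m + 1 / 2 then -1 else 1 := by
  rcases prod_halfSign_parity s hx with ⟨⟨k, hk⟩, hp⟩ | ⟨ho, hp⟩
  · rw [hp, if_neg]
    rintro ⟨m, hm⟩
    exact intCast_ne_intCast_add_half k m (hk ▸ hm)
  · rw [hp, if_pos ho]

section Probability

variable {Ω : Type*} [MeasureSpace Ω] [IsProbabilityMeasure (ℙ : Measure Ω)]

theorem ae_mem_of_sum_measure_eq_one {α : Type*} [MeasurableSpace α]
    [MeasurableSingletonClass α] {X : Ω → α} (hX : Measurable X) {s : Finset α}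
    (hs : ∑ x ∈ s, (ℙ {ω | X ω = x}).toReal = 1) : ∀ᵐ ω, X ω ∈ s := by
  have hmeas : MeasurableSet (X ⁻¹' s) := hX s.measurableSet
  have hunion : X ⁻¹' s = ⋃ x ∈ s, {ω | X ω = x} := by ext ω; simp [eq_comm]
  have hpre : (ℙ (X ⁻¹' s)).toReal = 1 := by
    rw [hunion, measure_biUnion_finset, ENNReal.toReal_sum fun _ _ => measure_ne_top _ _, hs]
    · intro x _ y _ hxy
      exact Set.disjoint_left.2 fun ω hx hy => hxy (hx.symm.trans hy)
    · exact fun x _ => hX (measurableSet_singleton x)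
  rw [ae_iff, show {ω | X ω ∉ s} = (X ⁻¹' s)ᶜ from rfl, prob_compl_eq_zero_iff hmeas,
    ← ENNReal.toReal_eq_one_iff, hpre]

theorem integral_comp_eq_sum_of_ae_mem {α : Type*} [MeasurableSpace α]
    [MeasurableSingletonClass α] {X : Ω → α} (hX : Measurable X) {s : Finset α}
    (hs : ∀ᵐ ω, X ω ∈ s) (f : α → ℝ) :
    ∫ ω, f (X ω) = ∑ x ∈ s, (ℙ {ω | X ω = x}).toReal * f x := by
  have hmeas : ∀ x, MeasurableSet {ω | X ω = x} := fun x => hX (measurableSet_singleton x)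
  have hdecomp : (fun ω => f (X ω)) =ᵐ[ℙ]
      fun ω => ∑ x ∈ s, {ω | X ω = x}.indicator (fun _ => f x) ω := by
    filter_upwards [hs] with ω hω
    simp [Set.indicator_apply, hω]
  rw [integral_congr_ae hdecomp,
    integral_finsetSum _ fun x _ => (integrable_const (f x)).indicator (hmeas x)]
  exact sum_congr rfl fun x _ => by
    rw [integral_indicator_const _ (hmeas x), smul_eq_mul, measureReal_def]

section Trinomial

variable {X : Ω → ℝ} {T W : ℝ}

theorem ae_mem_of_trinomial (hX : Measurable X) (hT : (ℙ {ω | X ω = 1 / 2}).toReal = T)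
    (hW : (ℙ {ω | X ω = 1}).toReal = W) (hL : (ℙ {ω | X ω = 0}).toReal = 1 - T - W) :
    ∀ᵐ ω, X ω ∈ ({0, 1 / 2, 1} : Finset ℝ) := by
  refine ae_mem_of_sum_measure_eq_one hX ?_
  rw [sum_insert (by norm_num), sum_insert (by norm_num), sum_singleton, hL, hT, hW]
  ring

theorem integral_comp_of_trinomial (hX : Measurable X) (hT : (ℙ {ω | X ω = 1 / 2}).toReal = T)
    (hW : (ℙ {ω | X ω = 1}).toReal = W) (hL : (ℙ {ω | X ω = 0}).toReal = 1 - T - W)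
    (f : ℝ → ℝ) : ∫ ω, f (X ω) = (1 - T - W) * f 0 + T * f (1 / 2) + W * f 1 := by
  rw [integral_comp_eq_sum_of_ae_mem hX (ae_mem_of_trinomial hX hT hW hL), sum_insert (by norm_num),
    sum_insert (by norm_num), sum_singleton, hL, hT, hW]
  ring

theorem abs_integral_mul_halfSign_sub_le_of_trinomial (hX : Measurable X)
    (hT : (ℙ {ω | X ω = 1 / 2}).toReal = T) (hW : (ℙ {ω | X ω = 1}).toReal = W)
    (hL : (ℙ {ω | X ω = 0}).toReal = 1 - T - W) (hT0 : 0 ≤ T) (hW0 : 0 ≤ W) (hTW1 : T + W ≤ 1) :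
    |(∫ ω, X ω * halfSign (X ω)) - (∫ ω, X ω) * ∫ ω, halfSign (X ω)| ≤
      1 / 2 * (1 - |∫ ω, halfSign (X ω)|) := by
  have hmoment := integral_comp_of_trinomial hX hT hW hL
  have hmean : ∫ ω, X ω = W + T / 2 := (hmoment fun x => x).trans (by ring)
  have hsign : ∫ ω, halfSign (X ω) = 1 - 2 * T := by
    rw [hmoment]; norm_num [halfSign]; ring
  have hmix : ∫ ω, X ω * halfSign (X ω) = W - T / 2 := by
    rw [hmoment fun x => x * halfSign x]; norm_num [halfSign]; ring
  rw [hmean, hsign, hmix]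
  rcases abs_cases (1 - 2 * T) with ⟨h, _⟩ | ⟨h, _⟩ <;> rw [h, abs_le] <;>
    constructor <;> nlinarith

end Trinomial

theorem abs_setIntegral_div_measure_sub_integral_le {E : Set Ω} (hE : MeasurableSet E)
    {S G : Ω → ℝ} (hS : Integrable S) {ε : ℝ} (hε : ε = 1 ∨ ε = -1)
    (hG : G =ᵐ[ℙ] fun ω => if ω ∈ E then ε else -ε)
    (hcov : |(∫ ω, S ω * G ω) - (∫ ω, S ω) * ∫ ω, G ω| ≤ 1 / 2 * (1 - |∫ ω, G ω|))
    (hE0 : 0 < (ℙ E).toReal) :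
    |(∫ ω in E, S ω) / (ℙ E).toReal - ∫ ω, S ω| ≤ 1 / 2 := by
  have hε2 : ε * ε = 1 := by rcases hε with rfl | rfl <;> norm_num
  have hGm : AEStronglyMeasurable G ℙ :=
    (Measurable.ite hE measurable_const measurable_const).aestronglyMeasurable.congr hG.symm
  have hGb : ∀ᵐ ω ∂ℙ, ‖G ω‖ ≤ 1 := by
    filter_upwards [hG] with ω hω
    rcases hε with rfl | rfl <;> split_ifs at hω <;> norm_num [hω]
  have hGint : Integrable G := .of_bound hGm 1 hGb
  have hSGint : Integrable fun ω => S ω * G ω := hS.mul_bdd hGm hGb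
  have hind : ∀ᵐ ω ∂ℙ, E.indicator 1 ω = (1 + ε * G ω) / 2 := by
    filter_upwards [hG] with ω hω
    by_cases h : ω ∈ E <;> simp [h, hω, hε2]
  have hP : (ℙ E).toReal = (1 + ε * ∫ ω, G ω) / 2 := by
    rw [← measureReal_def, ← integral_indicator_one hE, integral_congr_ae hind, integral_div,
      integral_add (integrable_const 1) (hGint.const_mul ε), integral_const_mul]
    simp
  have hI : ∫ ω in E, S ω = ((∫ ω, S ω) + ε * ∫ ω, S ω * G ω) / 2 := by
    rw [← integral_indicator hE]
    have : E.indicator S =ᵐ[ℙ] fun ω => (S ω + ε * (S ω * G ω)) / 2 := by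
      filter_upwards [hind] with ω hω
      have hmul : E.indicator S ω = S ω * E.indicator 1 ω := by by_cases h : ω ∈ E <;> simp [h]
      rw [hmul, hω]
      ring
    rw [integral_congr_ae this, integral_div, integral_add hS (hSGint.const_mul ε),
      integral_const_mul]
  have hpos : 0 < 1 + ε * ∫ ω, G ω := by linarith
  have hdiff : (∫ ω in E, S ω) / (ℙ E).toReal - ∫ ω, S ω =
      ε * ((∫ ω, S ω * G ω) - (∫ ω, S ω) * ∫ ω, G ω) / (1 + ε * ∫ ω, G ω) := by
    rw [hI, hP]
    field_simp
    ring
  have hεG : -|∫ ω, G ω| ≤ ε * ∫ ω, G ω := by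
    rcases hε with rfl | rfl
    · simpa using neg_abs_le _
    · simpa using le_abs_self _
  rw [hdiff, abs_div, abs_mul, abs_of_pos hpos, div_le_iff₀ hpos,
    show |ε| = 1 by rcases hε with rfl | rfl <;> norm_num, one_mul]
  linarith

end Probability

section Independence

variable {Ω ι : Type*} [MeasureSpace Ω] [Fintype ι]
  {X : ι → Ω → ℝ} {g : ℝ → ℝ}

theorem ProbabilityTheory.iIndepFun.integral_mul_prod_comp (hX : iIndepFun X ℙ)
    (hXm : ∀ i, Measurable (X i)) (hg : Measurable g) (j : ι) :
    ∫ ω, X j ω * ∏ i, g (X i ω) =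
      (∫ ω, X j ω * g (X j ω)) * ∏ i ∈ univ.erase j, ∫ ω, g (X i ω) := by
  set f : ι → ℝ → ℝ := Function.update (fun _ => g) j fun x => x * g x
  have hsplit (h : ι → ℝ) : ∏ i, h i = h j * ∏ i ∈ univ.erase j, h i :=
    (mul_prod_erase univ h (mem_univ j)).symm
  have hf_ne : ∀ i ∈ univ.erase j, f i = g := fun i hi =>
    Function.update_of_ne (ne_of_mem_erase hi) _ _
  have hfm (i : ι) : Measurable (f i) := by
    by_cases hi : i = j
    · subst hi; simp only [f, Function.update_self]; fun_prop
    · rw [hf_ne i (mem_erase.2 ⟨hi, mem_univ i⟩)]; exact hg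
  calc ∫ ω, X j ω * ∏ i, g (X i ω) = ∫ ω, ∏ i, f i (X i ω) := by
        congr 1; ext ω
        rw [hsplit fun i => f i (X i ω), hsplit fun i => g (X i ω),
          prod_congr rfl fun i hi => congrFun (hf_ne i hi) (X i ω)]
        simp [f, mul_assoc]
    _ = ∏ i, ∫ ω, f i (X i ω) :=
        hX.integral_fun_prod_comp (fun i => (hXm i).aemeasurable)
          fun i => (hfm i).aestronglyMeasurable
    _ = _ := by
        rw [hsplit fun i => ∫ ω, f i (X i ω),
          prod_congr rfl fun i hi => congrArg (fun F => ∫ ω, F (X i ω)) (hf_ne i hi)]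
        simp [f]

theorem ProbabilityTheory.iIndepFun.integral_sum_mul_prod_comp_sub (hX : iIndepFun X ℙ)
    (hXm : ∀ i, Measurable (X i)) (hXint : ∀ i, Integrable (X i)) (hg : Measurable g)
    (hgb : ∀ x, |g x| ≤ 1) :
    (∫ ω, (∑ i, X i ω) * ∏ i, g (X i ω)) - (∫ ω, ∑ i, X i ω) * ∫ ω, ∏ i, g (X i ω) =
      ∑ j, (∏ i ∈ univ.erase j, ∫ ω, g (X i ω)) *
        ((∫ ω, X j ω * g (X j ω)) - (∫ ω, X j ω) * ∫ ω, g (X j ω)) := by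
  have hGm : AEStronglyMeasurable (fun ω => ∏ i, g (X i ω)) ℙ :=
    (Finset.measurable_prod _ fun i _ => hg.comp (hXm i)).aestronglyMeasurable
  have hGb : ∀ᵐ ω ∂ℙ, ‖∏ i, g (X i ω)‖ ≤ 1 := .of_forall fun ω => by
    rw [Real.norm_eq_abs, abs_prod]
    exact prod_le_one (fun _ _ => abs_nonneg _) fun i _ => hgb _
  have hprod : ∫ ω, ∏ i, g (X i ω) = ∏ i, ∫ ω, g (X i ω) :=
    hX.integral_fun_prod_comp (fun i => (hXm i).aemeasurable) fun _ => hg.aestronglyMeasurable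
  simp_rw [sum_mul]
  rw [integral_finsetSum _ fun j _ => (hXint j).mul_bdd hGm hGb,
    integral_finsetSum _ fun j _ => hXint j, sum_mul, ← sum_sub_distrib]
  refine sum_congr rfl fun j _ => ?_
  rw [hX.integral_mul_prod_comp hXm hg j, hprod, ← mul_prod_erase univ _ (mem_univ j)]
  ring

theorem ProbabilityTheory.iIndepFun.abs_integral_sum_mul_prod_comp_sub_le (hX : iIndepFun X ℙ)
    (hXm : ∀ i, Measurable (X i)) (hXint : ∀ i, Integrable (X i)) (hg : Measurable g)
    (hgb : ∀ x, |g x| ≤ 1) {C : ℝ} (hC : 0 ≤ C)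
    (hcov : ∀ i, |(∫ ω, X i ω * g (X i ω)) - (∫ ω, X i ω) * ∫ ω, g (X i ω)| ≤
      C * (1 - |∫ ω, g (X i ω)|)) :
    |(∫ ω, (∑ i, X i ω) * ∏ i, g (X i ω)) - (∫ ω, ∑ i, X i ω) * ∫ ω, ∏ i, g (X i ω)| ≤
      C * (1 - |∫ ω, ∏ i, g (X i ω)|) := by
  have := hX.isProbabilityMeasure
  have hgX (i : ι) : |∫ ω, g (X i ω)| ≤ 1 := by
    simpa using norm_integral_le_of_norm_le_const (μ := ℙ) (f := fun ω => g (X i ω)) (C := 1)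
      (.of_forall fun ω => by simpa [Real.norm_eq_abs] using hgb (X i ω))
  rw [hX.integral_sum_mul_prod_comp_sub hXm hXint hg hgb,
    hX.integral_fun_prod_comp (fun i => (hXm i).aemeasurable) fun _ => hg.aestronglyMeasurable]
  exact abs_sum_prod_erase_mul_le univ hC (fun i _ => hgX i) fun i _ => hcov i

end Independence

/-- `|μ_even - μ| ≤ 1/2` and `|μ_odd - μ| ≤ 1/2`. -/
theorem poisson_trinomial_conditional_means_close_to_mean
    {Ω : Type*} [MeasureSpace Ω] [IsProbabilityMeasure (ℙ : Measure Ω)]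
    {n : ℕ} (X : Fin n → Ω → ℝ) (T W : Fin n → ℝ)
    (hmeas : ∀ i, Measurable (X i))
    (hindep : iIndepFun X ℙ)
    (hT0 : ∀ i, 0 ≤ T i) (hW0 : ∀ i, 0 ≤ W i) (hTW1 : ∀ i, T i + W i ≤ 1)
    (hT : ∀ i, (ℙ {ω | X i ω = 1/2}).toReal = T i)
    (hW : ∀ i, (ℙ {ω | X i ω = 1}).toReal = W i)
    (hL : ∀ i, (ℙ {ω | X i ω = 0}).toReal = 1 - T i - W i)
    (hposZ : 0 < (ℙ {ω | ∃ m : ℤ, (∑ i, X i ω) = (m : ℝ)}).toReal)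
    (hposH : 0 < (ℙ {ω | ∃ m : ℤ, (∑ i, X i ω) = (m : ℝ) + 1/2}).toReal)
    (μ μeven μodd : ℝ)
    (hμ : μ = ∫ ω, ∑ i, X i ω ∂ℙ)
    (hμeven : μeven = (∫ ω in {ω | ∃ m : ℤ, (∑ i, X i ω) = (m : ℝ)}, ∑ i, X i ω ∂ℙ)
        / (ℙ {ω | ∃ m : ℤ, (∑ i, X i ω) = (m : ℝ)}).toReal)
    (hμodd : μodd = (∫ ω in {ω | ∃ m : ℤ, (∑ i, X i ω) = (m : ℝ) + 1/2}, ∑ i, X i ω ∂ℙ)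
        / (ℙ {ω | ∃ m : ℤ, (∑ i, X i ω) = (m : ℝ) + 1/2}).toReal) :
    |μeven - μ| ≤ 1/2 ∧ |μodd - μ| ≤ 1/2 := by
  have hsupp (i : Fin n) := ae_mem_of_trinomial (hmeas i) (hT i) (hW i) (hL i)
  have hXint (i : Fin n) : Integrable (X i) := .of_bound (hmeas i).aestronglyMeasurable 1 <| by
    filter_upwards [hsupp i] with ω hω
    simp only [mem_insert, mem_singleton] at hω
    rcases hω with h | h | h <;> norm_num [h]
  have hcov := hindep.abs_integral_sum_mul_prod_comp_sub_le hmeas hXint measurable_halfSign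
    abs_halfSign_le one_half_pos.le fun i =>
      abs_integral_mul_halfSign_sub_le_of_trinomial (hmeas i) (hT i) (hW i) (hL i) (hT0 i) (hW0 i)
        (hTW1 i)
  have hvalues : ∀ᵐ ω, ∀ i ∈ univ, X i ω = 0 ∨ X i ω = 1 / 2 ∨ X i ω = 1 := by
    filter_upwards [ae_all_iff.2 hsupp] with ω hω i _
    simpa using hω i
  have hSm : Measurable fun ω => ∑ i, X i ω := Finset.measurable_sum _ fun i _ => hmeas i
  have hlevel (c : ℤ → ℝ) : MeasurableSet {ω | ∃ m : ℤ, ∑ i, X i ω = c m} := by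
    simp only [Set.ofPred_exists]
    exact .iUnion fun m => hSm (measurableSet_singleton _)
  have hSint : Integrable fun ω => ∑ i, X i ω := integrable_finsetSum _ fun i _ => hXint i
  rw [hμeven, hμodd, hμ]
  refine ⟨abs_setIntegral_div_measure_sub_integral_le (hlevel _) hSint (.inl rfl) ?_ hcov hposZ,
    abs_setIntegral_div_measure_sub_integral_le (hlevel _) hSint (.inr rfl) ?_ hcov hposH⟩
  · filter_upwards [hvalues] with ω hω using prod_halfSign_eq_ite_int univ hω
  · filter_upwards [hvalues] with ω hω
    rw [neg_neg]
    exact prod_halfSign_eq_ite_int_add_half univ hω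
end

section
/- The two conditional means are within 1 of each other: |μ_even − μ_odd| ≤ 1. -/
open MeasureTheory ProbabilityTheory Finset
open scoped Classical

/-!
On `½ℤ` the function `φ = paritySign`, `φ x = cos (2πx)`, is a character, `1` on `ℤ` and `-1` on
`ℤ + ½`. So the indicators of `X ∈ ℤ` and `X ∈ ℤ + ½` are `(1 ± φ X) / 2`, and everything reduces
to `a = E φ(X)`, `M = E X` and `B = E[X φ(X)]`: `μ_even - μ_odd = 2 (B - a M) / (1 - a²)`.
By independence `a = ∏ c_i` with `c_i = E φ(X_i) = 1 - 2 T_i`, and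
`B - a M = ∑ i, Cov(X_i, φ(X_i)) ∏_{j ≠ i} c_j`. Each covariance is `-T_i (1 - T_i - 2 W_i)`, at
most `(1 - |c_i|) / 2` in absolute value, and `∑ i, (1 - |c_i|) ∏_{j ≠ i} |c_j| ≤ 1 - ∏ |c_j|`,
which is at most `1 - a²`.
-/

open Real in
noncomputable def paritySign (x : ℝ) : ℝ := cos (2 * π * x)

local notation "½ℤ" => AddSubgroup.zmultiples (1 / 2 : ℝ)

open Real in
lemma paritySign_add {x : ℝ} (hx : x ∈ ½ℤ) (y : ℝ) :
    paritySign (x + y) = paritySign x * paritySign y := by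
  obtain ⟨k, rfl⟩ := AddSubgroup.mem_zmultiples_iff.mp hx
  have hsin : sin (2 * π * (k • (1 / 2 : ℝ))) = 0 := by
    rw [zsmul_eq_mul, ← sin_int_mul_pi k]; ring_nf
  simp only [paritySign, mul_add, cos_add, hsin, zero_mul, sub_zero]

lemma paritySign_sum {ι : Type*} {s : Finset ι} {x : ι → ℝ} (hx : ∀ i ∈ s, x i ∈ ½ℤ) :
    paritySign (∑ i ∈ s, x i) = ∏ i ∈ s, paritySign (x i) := by
  induction s using Finset.induction_on with
  | empty => simp [paritySign]
  | insert a s ha ih =>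
    rw [sum_insert ha, prod_insert ha, paritySign_add (hx a (mem_insert_self a s)),
      ih fun i hi => hx i (mem_insert_of_mem hi)]

lemma paritySign_intCast (m : ℤ) : paritySign m = 1 := by
  rw [paritySign, ← Real.cos_int_mul_two_pi m]; ring_nf

lemma paritySign_intCast_add_half (m : ℤ) : paritySign (m + 1 / 2) = -1 := by
  rw [paritySign, ← Real.cos_int_mul_two_pi_add_pi m]; ring_nf

lemma paritySign_zero : paritySign 0 = 1 := by simpa using paritySign_intCast 0

lemma paritySign_one : paritySign 1 = 1 := by simpa using paritySign_intCast 1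

lemma paritySign_half : paritySign (1 / 2) = -1 := by simpa using paritySign_intCast_add_half 0

lemma abs_paritySign_le (x : ℝ) : |paritySign x| ≤ 1 := Real.abs_cos_le_one _

@[fun_prop]
lemma measurable_paritySign : Measurable paritySign := by unfold paritySign; fun_prop

lemma exists_intCast_or_intCast_add_half {x : ℝ} (hx : x ∈ ½ℤ) :
    (∃ m : ℤ, x = m) ∨ ∃ m : ℤ, x = m + 1 / 2 := by
  obtain ⟨k, rfl⟩ := AddSubgroup.mem_zmultiples_iff.mp hx
  rcases Int.even_or_odd' k with ⟨m, rfl | rfl⟩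
  · exact .inl ⟨m, by rw [zsmul_eq_mul]; push_cast; ring⟩
  · exact .inr ⟨m, by rw [zsmul_eq_mul]; push_cast; ring⟩

lemma indicator_setOf_intCast {x : ℝ} (hx : x ∈ ½ℤ) (c : ℝ) :
    {y : ℝ | ∃ m : ℤ, y = m}.indicator (fun _ => c) x = c * (1 + paritySign x) / 2 := by
  by_cases h : x ∈ {y : ℝ | ∃ m : ℤ, y = m}
  · rw [Set.indicator_of_mem h]
    obtain ⟨m, rfl⟩ := h
    rw [paritySign_intCast]; ring
  · rw [Set.indicator_of_notMem h]
    obtain ⟨m, rfl⟩ := (exists_intCast_or_intCast_add_half hx).resolve_left h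
    rw [paritySign_intCast_add_half]; ring

lemma indicator_setOf_intCast_add_half {x : ℝ} (hx : x ∈ ½ℤ) (c : ℝ) :
    {y : ℝ | ∃ m : ℤ, y = m + 1 / 2}.indicator (fun _ => c) x = c * (1 - paritySign x) / 2 := by
  by_cases h : x ∈ {y : ℝ | ∃ m : ℤ, y = m + 1 / 2}
  · rw [Set.indicator_of_mem h]
    obtain ⟨m, rfl⟩ := h
    rw [paritySign_intCast_add_half]; ring
  · rw [Set.indicator_of_notMem h]
    obtain ⟨m, rfl⟩ := (exists_intCast_or_intCast_add_half hx).resolve_right h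
    rw [paritySign_intCast]; ring

lemma prod_ite_eq_mul_prod_erase {ι M : Type*} [Fintype ι] [DecidableEq ι] [CommMonoid M]
    (i : ι) (f g : ι → M) :
    ∏ j, (if j = i then f j else g j) = f i * ∏ j ∈ univ.erase i, g j := by
  rw [prod_ite, filter_eq', filter_ne', if_pos (mem_univ i), prod_singleton]

lemma measurableSet_setOf_exists_eq (f : ℤ → ℝ) : MeasurableSet {y : ℝ | ∃ m : ℤ, y = f m} :=
  ((Set.countable_range f).mono (by rintro _ ⟨m, rfl⟩; exact ⟨m, rfl⟩)).measurableSet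

section
variable {Ω : Type*} [MeasurableSpace Ω] {P : Measure Ω}

lemma integrable_mul_paritySign {Y f : Ω → ℝ} (hY : Measurable Y) (hf : Integrable f P) :
    Integrable (fun ω => f ω * paritySign (Y ω)) P :=
  hf.mul_bdd (measurable_paritySign.comp hY).aestronglyMeasurable
    (.of_forall fun ω => abs_paritySign_le (Y ω))

lemma setIntegral_setOf_intCast {Y f : Ω → ℝ} (hY : Measurable Y) (hH : ∀ᵐ ω ∂P, Y ω ∈ ½ℤ)
    (hf : Integrable f P) :
    ∫ ω in {ω | ∃ m : ℤ, Y ω = m}, f ω ∂P =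
      ((∫ ω, f ω ∂P) + ∫ ω, f ω * paritySign (Y ω) ∂P) / 2 := by
  have hE : MeasurableSet {ω | ∃ m : ℤ, Y ω = m} := hY (measurableSet_setOf_exists_eq Int.cast)
  rw [← integral_indicator hE, ← integral_add hf (integrable_mul_paritySign hY hf),
    ← integral_div]
  refine integral_congr_ae ?_
  filter_upwards [hH] with ω hω
  exact (indicator_setOf_intCast hω (f ω)).trans (by ring)

lemma setIntegral_setOf_intCast_add_half {Y f : Ω → ℝ} (hY : Measurable Y)
    (hH : ∀ᵐ ω ∂P, Y ω ∈ ½ℤ) (hf : Integrable f P) :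
    ∫ ω in {ω | ∃ m : ℤ, Y ω = m + 1 / 2}, f ω ∂P =
      ((∫ ω, f ω ∂P) - ∫ ω, f ω * paritySign (Y ω) ∂P) / 2 := by
  have hE : MeasurableSet {ω | ∃ m : ℤ, Y ω = m + 1 / 2} :=
    hY (measurableSet_setOf_exists_eq fun m => m + 1 / 2)
  rw [← integral_indicator hE, ← integral_sub hf (integrable_mul_paritySign hY hf),
    ← integral_div]
  refine integral_congr_ae ?_
  filter_upwards [hH] with ω hω
  exact (indicator_setOf_intCast_add_half hω (f ω)).trans (by ring)

lemma measureReal_setOf_intCast [IsProbabilityMeasure P] {Y : Ω → ℝ} (hY : Measurable Y)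
    (hH : ∀ᵐ ω ∂P, Y ω ∈ ½ℤ) :
    P.real {ω | ∃ m : ℤ, Y ω = m} = (1 + ∫ ω, paritySign (Y ω) ∂P) / 2 := by
  simpa using setIntegral_setOf_intCast hY hH (integrable_const (1 : ℝ))

lemma measureReal_setOf_intCast_add_half [IsProbabilityMeasure P] {Y : Ω → ℝ}
    (hY : Measurable Y) (hH : ∀ᵐ ω ∂P, Y ω ∈ ½ℤ) :
    P.real {ω | ∃ m : ℤ, Y ω = m + 1 / 2} = (1 - ∫ ω, paritySign (Y ω) ∂P) / 2 := by
  simpa using setIntegral_setOf_intCast_add_half hY hH (integrable_const (1 : ℝ))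

variable {ι : Type*} [Fintype ι] {X : ι → Ω → ℝ}

lemma integral_paritySign_sum (hX : iIndepFun X P) (hmeas : ∀ i, Measurable (X i))
    (hH : ∀ᵐ ω ∂P, ∀ i, X i ω ∈ ½ℤ) :
    ∫ ω, paritySign (∑ i, X i ω) ∂P = ∏ i, ∫ ω, paritySign (X i ω) ∂P := by
  rw [← hX.integral_fun_prod_comp (fun i => (hmeas i).aemeasurable)
    (fun _ => measurable_paritySign.aestronglyMeasurable)]
  refine integral_congr_ae ?_
  filter_upwards [hH] with ω hω using paritySign_sum fun i _ => hω i

lemma integral_sum_mul_paritySign_sum [DecidableEq ι] (hX : iIndepFun X P)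
    (hmeas : ∀ i, Measurable (X i)) (hint : ∀ i, Integrable (X i) P)
    (hH : ∀ᵐ ω ∂P, ∀ i, X i ω ∈ ½ℤ) :
    ∫ ω, (∑ i, X i ω) * paritySign (∑ i, X i ω) ∂P =
      ∑ i, (∫ ω, X i ω * paritySign (X i ω) ∂P) *
        ∏ j ∈ univ.erase i, ∫ ω, paritySign (X j ω) ∂P := by
  let F (i j : ι) : ℝ → ℝ := if j = i then fun x => x * paritySign x else paritySign
  have hF (i : ι) (x : ι → ℝ) :
      ∏ j, F i j (x j) = x i * (paritySign (x i) * ∏ j ∈ univ.erase i, paritySign (x j)) := by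
    simp only [F, ite_apply]
    rw [prod_ite_eq_mul_prod_erase, mul_assoc]
  have hFint (i : ι) : Integrable (fun ω => ∏ j, F i j (X j ω)) P := by
    simp only [hF]
    refine (hint i).mul_bdd (c := 1) (by fun_prop) (.of_forall fun ω => ?_)
    rw [Real.norm_eq_abs, abs_mul, abs_prod]
    exact mul_le_one₀ (abs_paritySign_le _) (by positivity)
      (prod_le_one (fun _ _ => abs_nonneg _) fun _ _ => abs_paritySign_le _)
  calc ∫ ω, (∑ i, X i ω) * paritySign (∑ i, X i ω) ∂P
      = ∫ ω, ∑ i, ∏ j, F i j (X j ω) ∂P := by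
        refine integral_congr_ae ?_
        filter_upwards [hH] with ω hω
        simp only [hF, paritySign_sum fun i _ => hω i, sum_mul]
        refine sum_congr rfl fun i _ => ?_
        rw [← mul_prod_erase univ _ (mem_univ i)]
    _ = ∑ i, ∏ j, ∫ ω, F i j (X j ω) ∂P := by
        rw [integral_finsetSum _ fun i _ => hFint i]
        refine sum_congr rfl fun i _ =>
          hX.integral_fun_prod_comp (fun j => (hmeas j).aemeasurable)
            fun j => Measurable.aestronglyMeasurable ?_
        simp only [F]
        split_ifs <;> fun_prop
    _ = _ := by
        refine sum_congr rfl fun i _ => ?_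
        rw [← prod_ite_eq_mul_prod_erase i (fun j => ∫ ω, X j ω * paritySign (X j ω) ∂P)]
        refine prod_congr rfl fun j _ => ?_
        simp only [F]
        split_ifs <;> rfl
end

section FiniteSupport
variable {Ω α E : Type*} [MeasurableSpace Ω] {P : Measure Ω} [NormedAddCommGroup E] {Y : Ω → α}
  {s : Finset α}

lemma comp_ae_eq_sum_indicator (hs : ∀ᵐ ω ∂P, Y ω ∈ s) (g : α → E) :
    (fun ω => g (Y ω)) =ᵐ[P] fun ω => ∑ x ∈ s, (Y ⁻¹' {x}).indicator (fun _ => g x) ω := by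
  filter_upwards [hs] with ω hω
  simp [Set.indicator_apply, hω]

variable [MeasurableSpace α] [MeasurableSingletonClass α]

lemma ae_mem_of_sum_measureReal_preimage_singleton_eq_one [IsProbabilityMeasure P]
    (hY : Measurable Y) (h : ∑ x ∈ s, P.real (Y ⁻¹' {x}) = 1) : ∀ᵐ ω ∂P, Y ω ∈ s := by
  rw [sum_measureReal_preimage_singleton s fun x _ => hY (measurableSet_singleton x),
    measureReal_def, ENNReal.toReal_eq_one_iff] at h
  exact (ae_mem_iff_measure_eq (hY s.measurableSet).nullMeasurableSet).2 (by rw [h, measure_univ])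

lemma integrable_comp_of_ae_mem [IsFiniteMeasure P] (hY : Measurable Y)
    (hs : ∀ᵐ ω ∂P, Y ω ∈ s) (g : α → E) : Integrable (fun ω => g (Y ω)) P :=
  (integrable_finsetSum _ fun x _ =>
    (integrable_const (g x)).indicator (hY (measurableSet_singleton x))).congr
    (comp_ae_eq_sum_indicator hs g).symm

lemma integral_comp_eq_sum_of_ae_mem_s8 [NormedSpace ℝ E] [CompleteSpace E] [IsFiniteMeasure P]
    (hY : Measurable Y) (hs : ∀ᵐ ω ∂P, Y ω ∈ s) (g : α → E) :
    ∫ ω, g (Y ω) ∂P = ∑ x ∈ s, P.real (Y ⁻¹' {x}) • g x := by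
  have hfib (x : α) : MeasurableSet (Y ⁻¹' {x}) := hY (measurableSet_singleton x)
  rw [integral_congr_ae (comp_ae_eq_sum_indicator hs g),
    integral_finsetSum _ fun x _ => (integrable_const (g x)).indicator (hfib x)]
  exact sum_congr rfl fun x _ => integral_indicator_const (g x) (hfib x)

end FiniteSupport

structure IsTrinomial {Ω : Type*} [MeasurableSpace Ω] (P : Measure Ω) (Y : Ω → ℝ) (t w : ℝ) :
    Prop where
  measurable : Measurable Y
  real_half : P.real (Y ⁻¹' {1 / 2}) = t
  real_one : P.real (Y ⁻¹' {1}) = w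
  real_zero : P.real (Y ⁻¹' {0}) = 1 - t - w

namespace IsTrinomial
variable {Ω : Type*} [MeasurableSpace Ω] {P : Measure Ω} [IsProbabilityMeasure P] {Y : Ω → ℝ}
  {t w : ℝ}

lemma ae_mem (hY : IsTrinomial P Y t w) : ∀ᵐ ω ∂P, Y ω ∈ ({0, 1 / 2, 1} : Finset ℝ) := by
  refine ae_mem_of_sum_measureReal_preimage_singleton_eq_one hY.measurable ?_
  rw [sum_insert (by norm_num), sum_insert (by norm_num), sum_singleton, hY.real_zero,
    hY.real_half, hY.real_one]
  ring

lemma ae_mem_zmultiples (hY : IsTrinomial P Y t w) : ∀ᵐ ω ∂P, Y ω ∈ ½ℤ := by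
  filter_upwards [hY.ae_mem] with ω hω
  simp only [mem_insert, mem_singleton] at hω
  rcases hω with h | h | h <;> rw [h]
  · exact zero_mem _
  · exact AddSubgroup.mem_zmultiples _
  · exact AddSubgroup.mem_zmultiples_iff.2 ⟨2, by norm_num⟩

lemma integrable (hY : IsTrinomial P Y t w) : Integrable Y P :=
  integrable_comp_of_ae_mem hY.measurable hY.ae_mem id

lemma integral_comp (hY : IsTrinomial P Y t w) (g : ℝ → ℝ) :
    ∫ ω, g (Y ω) ∂P = (1 - t - w) * g 0 + t * g (1 / 2) + w * g 1 := by
  rw [integral_comp_eq_sum_of_ae_mem_s8 hY.measurable hY.ae_mem, sum_insert (by norm_num),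
    sum_insert (by norm_num), sum_singleton, hY.real_zero, hY.real_half, hY.real_one]
  simp only [smul_eq_mul]
  ring

lemma integral_paritySign (hY : IsTrinomial P Y t w) :
    ∫ ω, paritySign (Y ω) ∂P = 1 - 2 * t := by
  rw [hY.integral_comp, paritySign_zero, paritySign_half, paritySign_one]; ring

lemma integral_eq (hY : IsTrinomial P Y t w) : ∫ ω, Y ω ∂P = t / 2 + w := by
  rw [hY.integral_comp fun x => x]; ring

lemma integral_mul_paritySign (hY : IsTrinomial P Y t w) :
    ∫ ω, Y ω * paritySign (Y ω) ∂P = w - t / 2 := by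
  rw [hY.integral_comp fun x => x * paritySign x, paritySign_half, paritySign_one]; ring

lemma two_mul_abs_cov_paritySign_le (hY : IsTrinomial P Y t w) :
    2 * |∫ ω, Y ω * paritySign (Y ω) ∂P - (∫ ω, paritySign (Y ω) ∂P) * ∫ ω, Y ω ∂P| ≤
      1 - |∫ ω, paritySign (Y ω) ∂P| := by
  have ht : 0 ≤ t := hY.real_half ▸ measureReal_nonneg
  have hw : 0 ≤ w := hY.real_one ▸ measureReal_nonneg
  have hl : 0 ≤ 1 - t - w := hY.real_zero ▸ measureReal_nonneg
  rw [hY.integral_mul_paritySign, hY.integral_paritySign, hY.integral_eq,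
    show w - t / 2 - (1 - 2 * t) * (t / 2 + w) = -(t * ((1 - t - w) - w)) by ring,
    abs_neg, abs_mul, abs_of_nonneg ht]
  have hd : |(1 - t - w) - w| ≤ 1 - t :=
    abs_sub_le_of_nonneg_of_le hl (by linarith) hw (by linarith)
  rcases abs_cases (1 - 2 * t) with ⟨h, _⟩ | ⟨h, _⟩ <;> rw [h] <;>
    nlinarith [mul_le_mul_of_nonneg_left hd ht]

end IsTrinomial

lemma sum_one_sub_mul_prod_erase_le {ι : Type*} [DecidableEq ι] (s : Finset ι) {d : ι → ℝ}
    (h0 : ∀ i ∈ s, 0 ≤ d i) (h1 : ∀ i ∈ s, d i ≤ 1) :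
    ∑ i ∈ s, (1 - d i) * ∏ j ∈ s.erase i, d j ≤ 1 - ∏ i ∈ s, d i := by
  induction s using Finset.induction_on with
  | empty => simp
  | insert a s ha ih =>
    have h0' := fun i hi => h0 i (mem_insert_of_mem hi)
    have h1' := fun i hi => h1 i (mem_insert_of_mem hi)
    have hP1 : ∏ i ∈ s, d i ≤ 1 := prod_le_one h0' h1'
    have hda := h0 a (mem_insert_self a s)
    have hda1 := h1 a (mem_insert_self a s)
    have hrest : ∑ i ∈ s, (1 - d i) * ∏ j ∈ (insert a s).erase i, d j =
        d a * ∑ i ∈ s, (1 - d i) * ∏ j ∈ s.erase i, d j := by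
      rw [mul_sum]
      refine sum_congr rfl fun i hi => ?_
      rw [erase_insert_of_ne (ne_of_mem_of_not_mem hi ha).symm,
        prod_insert fun h => ha (mem_of_mem_erase h)]
      ring
    rw [sum_insert ha, prod_insert ha, erase_insert ha, hrest]
    nlinarith [mul_le_mul_of_nonneg_left (ih h0' h1') hda]

lemma two_mul_abs_sum_mul_prod_erase_sub_le {ι : Type*} [Fintype ι] [DecidableEq ι]
    (c m e : ι → ℝ) (h : ∀ i, 2 * |e i - c i * m i| ≤ 1 - |c i|) :
    2 * |∑ i, e i * ∏ j ∈ univ.erase i, c j - (∏ i, c i) * ∑ i, m i| ≤ 1 - (∏ i, c i) ^ 2 := by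
  have hc (i : ι) : |c i| ≤ 1 := by linarith [h i, abs_nonneg (e i - c i * m i)]
  have hsplit : ∑ i, e i * ∏ j ∈ univ.erase i, c j - (∏ i, c i) * ∑ i, m i =
      ∑ i, (e i - c i * m i) * ∏ j ∈ univ.erase i, c j := by
    rw [mul_sum, ← sum_sub_distrib]
    refine sum_congr rfl fun i _ => ?_
    rw [← mul_prod_erase univ c (mem_univ i)]
    ring
  have hprod : (∏ i, c i) ^ 2 ≤ ∏ i, |c i| := by
    have h1 : ∏ i, |c i| ≤ 1 := prod_le_one (fun i _ => abs_nonneg _) fun i _ => hc i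
    rw [← sq_abs, abs_prod]
    nlinarith [prod_nonneg fun i (_ : i ∈ univ) => abs_nonneg (c i)]
  calc 2 * |∑ i, e i * ∏ j ∈ univ.erase i, c j - (∏ i, c i) * ∑ i, m i|
      ≤ 2 * ∑ i, |e i - c i * m i| * ∏ j ∈ univ.erase i, |c j| := by
        rw [hsplit]
        gcongr
        refine (abs_sum_le_sum_abs _ _).trans_eq (sum_congr rfl fun i _ => ?_)
        rw [abs_mul, abs_prod]
    _ = ∑ i, 2 * |e i - c i * m i| * ∏ j ∈ univ.erase i, |c j| := by
        simp only [mul_sum, mul_assoc]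
    _ ≤ ∑ i, (1 - |c i|) * ∏ j ∈ univ.erase i, |c j| :=
        sum_le_sum fun i _ => mul_le_mul_of_nonneg_right (h i) (by positivity)
    _ ≤ 1 - ∏ i, |c i| :=
        sum_one_sub_mul_prod_erase_le univ (fun i _ => abs_nonneg _) fun i _ => hc i
    _ ≤ 1 - (∏ i, c i) ^ 2 := by linarith

lemma abs_div_sub_div_le_one {a M B : ℝ} (h1 : 0 < 1 + a) (h2 : 0 < 1 - a)
    (h : 2 * |B - a * M| ≤ 1 - a ^ 2) :
    |(M + B) / 2 / ((1 + a) / 2) - (M - B) / 2 / ((1 - a) / 2)| ≤ 1 := by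
  rw [show (M + B) / 2 / ((1 + a) / 2) - (M - B) / 2 / ((1 - a) / 2) =
    2 * (B - a * M) / ((1 + a) * (1 - a)) by field_simp; ring, abs_div, abs_mul, abs_two,
    abs_of_pos (mul_pos h1 h2), div_le_one (mul_pos h1 h2)]
  linarith

theorem poisson_trinomial_conditional_means_close_general
    {Ω : Type*} [MeasureSpace Ω] [IsProbabilityMeasure (ℙ : Measure Ω)]
    {n : ℕ} (X : Fin n → Ω → ℝ) (T W : Fin n → ℝ)
    (hmeas : ∀ i, Measurable (X i))
    (hindep : iIndepFun X ℙ)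
    (hT : ∀ i, (ℙ {ω | X i ω = 1/2}).toReal = T i)
    (hW : ∀ i, (ℙ {ω | X i ω = 1}).toReal = W i)
    (hL : ∀ i, (ℙ {ω | X i ω = 0}).toReal = 1 - T i - W i)
    (hposZ : 0 < (ℙ {ω | ∃ m : ℤ, (∑ i, X i ω) = (m : ℝ)}).toReal)
    (hposH : 0 < (ℙ {ω | ∃ m : ℤ, (∑ i, X i ω) = (m : ℝ) + 1/2}).toReal)
    (μeven μodd : ℝ)
    (hμeven : μeven = (∫ ω in {ω | ∃ m : ℤ, (∑ i, X i ω) = (m : ℝ)}, ∑ i, X i ω ∂ℙ)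
        / (ℙ {ω | ∃ m : ℤ, (∑ i, X i ω) = (m : ℝ)}).toReal)
    (hμodd : μodd = (∫ ω in {ω | ∃ m : ℤ, (∑ i, X i ω) = (m : ℝ) + 1/2}, ∑ i, X i ω ∂ℙ)
        / (ℙ {ω | ∃ m : ℤ, (∑ i, X i ω) = (m : ℝ) + 1/2}).toReal) :
    |μeven - μodd| ≤ 1 := by
  have hX (i : Fin n) : IsTrinomial ℙ (X i) (T i) (W i) := ⟨hmeas i, hT i, hW i, hL i⟩
  have hint (i : Fin n) : Integrable (X i) ℙ := (hX i).integrable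
  have hH : ∀ᵐ ω ∂ℙ, ∀ i, X i ω ∈ ½ℤ := ae_all_iff.2 fun i => (hX i).ae_mem_zmultiples
  have hSH : ∀ᵐ ω ∂ℙ, ∑ i, X i ω ∈ ½ℤ := hH.mono fun ω h => sum_mem fun i _ => h i
  have hS : Measurable fun ω => ∑ i, X i ω := by fun_prop
  have hSint : Integrable (fun ω => ∑ i, X i ω) ℙ :=
    integrable_finsetSum _ fun i _ => hint i
  rw [← measureReal_def, measureReal_setOf_intCast hS hSH,
    integral_paritySign_sum hindep hmeas hH] at hposZ
  rw [← measureReal_def, measureReal_setOf_intCast_add_half hS hSH,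
    integral_paritySign_sum hindep hmeas hH] at hposH
  rw [hμeven, hμodd, ← measureReal_def, ← measureReal_def, measureReal_setOf_intCast hS hSH,
    measureReal_setOf_intCast_add_half hS hSH, setIntegral_setOf_intCast hS hSH hSint,
    setIntegral_setOf_intCast_add_half hS hSH hSint, integral_paritySign_sum hindep hmeas hH,
    integral_sum_mul_paritySign_sum hindep hmeas hint hH, integral_finsetSum _ fun i _ => hint i]
  exact abs_div_sub_div_le_one (by linarith) (by linarith)
    (two_mul_abs_sum_mul_prod_erase_sub_le _ _ _ fun i => (hX i).two_mul_abs_cov_paritySign_le)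

/-- `|μ_even - μ_odd| ≤ 1`. -/
theorem poisson_trinomial_conditional_means_close
    {Ω : Type*} [MeasureSpace Ω] [IsProbabilityMeasure (ℙ : Measure Ω)]
    {n : ℕ} (X : Fin n → Ω → ℝ) (T W : Fin n → ℝ)
    (hmeas : ∀ i, Measurable (X i))
    (hindep : iIndepFun X ℙ)
    (hT0 : ∀ i, 0 ≤ T i) (hW0 : ∀ i, 0 ≤ W i) (hTW1 : ∀ i, T i + W i ≤ 1)
    (hT : ∀ i, (ℙ {ω | X i ω = 1/2}).toReal = T i)
    (hW : ∀ i, (ℙ {ω | X i ω = 1}).toReal = W i)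
    (hL : ∀ i, (ℙ {ω | X i ω = 0}).toReal = 1 - T i - W i)
    (hposZ : 0 < (ℙ {ω | ∃ m : ℤ, (∑ i, X i ω) = (m : ℝ)}).toReal)
    (hposH : 0 < (ℙ {ω | ∃ m : ℤ, (∑ i, X i ω) = (m : ℝ) + 1/2}).toReal)
    (μeven μodd : ℝ)
    (hμeven : μeven = (∫ ω in {ω | ∃ m : ℤ, (∑ i, X i ω) = (m : ℝ)}, ∑ i, X i ω ∂ℙ)
        / (ℙ {ω | ∃ m : ℤ, (∑ i, X i ω) = (m : ℝ)}).toReal)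
    (hμodd : μodd = (∫ ω in {ω | ∃ m : ℤ, (∑ i, X i ω) = (m : ℝ) + 1/2}, ∑ i, X i ω ∂ℙ)
        / (ℙ {ω | ∃ m : ℤ, (∑ i, X i ω) = (m : ℝ) + 1/2}).toReal) :
    |μeven - μodd| ≤ 1 :=
  poisson_trinomial_conditional_means_close_general X T W hmeas hindep hT hW hL hposZ hposH μeven
    μodd hμeven hμodd
end
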